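/- arXiv:2406.16313 — 3 statements merged into one kernel-verified Lean document; each statement's English description precedes it below -/
import Mathlib

section
/- Fix α, β ∈ (0,1) and an integer r > 0. Let Sh: {0,1}^b × {0,1}^d → ({0,1}^ℓ)² satisfy perfect correctness (there is a function Rec with Rec(Sh(x,y)) = x for all x, y), fix y ∈ {0,1}^d, and let (Z₁, Z₂) = Sh(U_b, y). If f, g: {0,1}^ℓ → {0,1}^b are chosen independently and uniformly at random, then with probability at least 1 − 3r·e^{b − α²·2^{min(b/r, (β−1/r)·b)}} over the choice of f and g, the distribution (f(Z₁), g(Z₂)) is (2α + r·2^{−(1−β−1/r)·b})-close in statistical distance to a (2b, (β − 1/r)·b − 4·log₂(1/α))-source. -/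
open Finset
open scoped Classical

/-- Bit strings of length `n`. -/
abbrev BS (n : ℕ) : Type := Fin n → Bool

/-- `p` is a probability mass function on the finite type `S`. -/
def IsDist {S : Type*} [Fintype S] (p : S → ℝ) : Prop :=
  (∀ s, 0 ≤ p s) ∧ ∑ s, p s = 1

/-- Statistical distance between two distributions on `S`. -/
noncomputable def statDist {S : Type*} [Fintype S] (p q : S → ℝ) : ℝ :=
  (∑ s, |p s - q s|) / 2

/-- Pushforward of a distribution `p` on `S` along `f : S → T`. -/
noncomputable def push {S T : Type*} [Fintype S] [DecidableEq T] (f : S → T)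
    (p : S → ℝ) : T → ℝ :=
  fun t => ∑ s, if f s = t then p s else 0

/-- The uniform distribution on `{0,1}^m`. -/
noncomputable def unif (m : ℕ) : BS m → ℝ := fun _ => 1 / 2 ^ m

lemma cardBS (n : ℕ) : Fintype.card (BS n) = 2 ^ n := by
  simp [BS]

lemma isDist_unif (m : ℕ) : IsDist (unif m) := by
  constructor
  · intro s; unfold unif; positivity
  · unfold unif
    rw [Finset.sum_const, card_univ, cardBS, nsmul_eq_mul]
    push_cast
    field_simp

lemma push_isDist {S T : Type*} [Fintype S] [Fintype T] [DecidableEq T] (f : S → T)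
    (p : S → ℝ) (hp : IsDist p) : IsDist (push f p) := by
  constructor
  · intro t
    apply Finset.sum_nonneg
    intro s _
    by_cases h : f s = t <;> simp [h, hp.1 s]
  · unfold push
    rw [Finset.sum_comm]
    rw [← hp.2]
    apply Finset.sum_congr rfl
    intro s _
    simp [Finset.sum_ite_eq]

lemma isDist_le_one {S : Type*} [Fintype S] {p : S → ℝ} (hp : IsDist p) (s : S) :
    p s ≤ 1 := by
  rw [← hp.2]
  exact Finset.single_le_sum (fun i _ => hp.1 i) (mem_univ s)

lemma statDist_le_one {S : Type*} [Fintype S] {p q : S → ℝ}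
    (hp : IsDist p) (hq : IsDist q) : statDist p q ≤ 1 := by
  unfold statDist
  have : ∑ s, |p s - q s| ≤ ∑ s, (p s + q s) := by
    apply Finset.sum_le_sum
    intro s _
    have := abs_sub (p s) (q s)
    calc |p s - q s| ≤ |p s| + |q s| := abs_sub _ _
      _ = p s + q s := by rw [abs_of_nonneg (hp.1 s), abs_of_nonneg (hq.1 s)]
  rw [Finset.sum_add_distrib, hp.2, hq.2] at this
  linarith

/-- Chernoff-type counting bound for weighted sums over a uniformly random function. -/
lemma mgf_count {ι A : Type*} [Fintype ι] [DecidableEq ι] [Fintype A] [DecidableEq A]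
    (w : ι → ℕ) (Wm : ℕ) (hw : ∀ i, w i ≤ Wm)
    (hsupp : ((univ : Finset ι).filter (fun i => w i ≠ 0)).card ≤ Fintype.card A)
    (u : A) (τ lam : ℝ) (hlam : 0 ≤ lam) :
    (((univ : Finset (ι → A)).filter (fun h : ι → A =>
        τ ≤ ∑ i, (w i : ℝ) * (if h i = u then 1 else 0))).card : ℝ) ≤
      Real.exp (Real.exp (lam * Wm) - 1 - lam * τ) * (Fintype.card (ι → A) : ℝ) := by
  have hA : (0:ℝ) < (Fintype.card A : ℝ) := by
    have : Nonempty A := ⟨u⟩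
    exact_mod_cast Fintype.card_pos
  set N : ℝ := (Fintype.card A : ℝ) with hN
  set Sf : (ι → A) → ℝ := fun h => ∑ i, (w i : ℝ) * (if h i = u then 1 else 0) with hSf
  -- step 1
  have step1 : (((univ : Finset (ι → A)).filter (fun h => τ ≤ Sf h)).card : ℝ)
      ≤ ∑ h : ι → A, Real.exp (lam * (Sf h - τ)) := by
    calc (((univ : Finset (ι → A)).filter (fun h => τ ≤ Sf h)).card : ℝ)
        = ∑ h ∈ (univ : Finset (ι → A)).filter (fun h => τ ≤ Sf h), (1:ℝ) := by
          rw [Finset.sum_const]; simp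
      _ ≤ ∑ h ∈ (univ : Finset (ι → A)).filter (fun h => τ ≤ Sf h),
            Real.exp (lam * (Sf h - τ)) := by
          apply Finset.sum_le_sum
          intro h hh
          rw [Finset.mem_filter] at hh
          have : 0 ≤ lam * (Sf h - τ) := mul_nonneg hlam (by linarith [hh.2])
          calc (1:ℝ) = Real.exp 0 := by simp
            _ ≤ _ := Real.exp_le_exp.2 this
      _ ≤ ∑ h : ι → A, Real.exp (lam * (Sf h - τ)) := by
          apply Finset.sum_le_sum_of_subset_of_nonneg (Finset.filter_subset _ _)
          intro h _ _
          exact (Real.exp_pos _).le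
  -- step 2 : factorize the sum of exponentials
  have step2 : ∑ h : ι → A, Real.exp (lam * (Sf h - τ))
      = Real.exp (-(lam * τ)) * ∏ i : ι, (∑ a : A, Real.exp (lam * (w i : ℝ) *
          (if a = u then 1 else 0))) := by
    rw [Fintype.prod_sum, Finset.mul_sum]
    apply Finset.sum_congr rfl
    intro h _
    rw [← Real.exp_sum, ← Real.exp_add]
    congr 1
    have hlin : lam * Sf h = ∑ i : ι, lam * (w i : ℝ) * (if h i = u then 1 else 0) := by
      rw [hSf, Finset.mul_sum]
      exact Finset.sum_congr rfl (fun i _ => by ring)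
    rw [mul_sub, hlin]
    ring
  -- inner sums
  have inner : ∀ i : ι, (∑ a : A, Real.exp (lam * (w i : ℝ) * (if a = u then 1 else 0)))
      = N + (Real.exp (lam * (w i : ℝ)) - 1) := by
    intro i
    have : ∀ a : A, Real.exp (lam * (w i : ℝ) * (if a = u then 1 else 0))
        = 1 + (if a = u then Real.exp (lam * (w i : ℝ)) - 1 else 0) := by
      intro a
      by_cases h : a = u <;> simp [h]
    rw [Finset.sum_congr rfl (fun a _ => this a)]
    rw [Finset.sum_add_distrib, Finset.sum_const, Finset.sum_ite_eq' Finset.univ u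
      (fun _ => Real.exp (lam * (w i : ℝ)) - 1)]
    simp [hN, card_univ]
  -- bound each inner sum by N * exp((e_i - 1)/N)
  have hei : ∀ i : ι, (0:ℝ) ≤ Real.exp (lam * (w i : ℝ)) - 1 := by
    intro i
    have h0 : (0:ℝ) ≤ lam * (w i : ℝ) := mul_nonneg hlam (by positivity)
    linarith [Real.one_le_exp h0]
  have hterm : ∀ i : ι, N + (Real.exp (lam * (w i : ℝ)) - 1)
      ≤ N * Real.exp ((Real.exp (lam * (w i : ℝ)) - 1) / N) := by
    intro i
    have h2 := Real.add_one_le_exp ((Real.exp (lam * (w i : ℝ)) - 1) / N)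
    calc N + (Real.exp (lam * (w i : ℝ)) - 1)
        = N * ((Real.exp (lam * (w i : ℝ)) - 1) / N + 1) := by field_simp; ring
      _ ≤ N * Real.exp ((Real.exp (lam * (w i : ℝ)) - 1) / N) :=
          mul_le_mul_of_nonneg_left h2 hA.le
  have sumbound : ∑ i : ι, (Real.exp (lam * (w i : ℝ)) - 1) / N
      ≤ Real.exp (lam * (Wm : ℝ)) - 1 := by
    have hE1 : (0:ℝ) ≤ Real.exp (lam * (Wm : ℝ)) - 1 := by
      have h0 : (0:ℝ) ≤ lam * (Wm : ℝ) := mul_nonneg hlam (by positivity)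
      linarith [Real.one_le_exp h0]
    have hptwise : ∀ i : ι, (Real.exp (lam * (w i : ℝ)) - 1)
        ≤ (if w i ≠ 0 then Real.exp (lam * (Wm : ℝ)) - 1 else 0) := by
      intro i
      by_cases h : w i = 0
      · simp [h]
      · simp only [h, ne_eq, not_false_eq_true, if_true]
        have : lam * (w i : ℝ) ≤ lam * (Wm : ℝ) :=
          mul_le_mul_of_nonneg_left (by exact_mod_cast hw i) hlam
        linarith [Real.exp_le_exp.2 this]
    have hsum2 : ∑ i : ι, (Real.exp (lam * (w i : ℝ)) - 1)
        ≤ (((univ : Finset ι).filter (fun i => w i ≠ 0)).card : ℝ) *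
          (Real.exp (lam * (Wm : ℝ)) - 1) := by
      calc ∑ i : ι, (Real.exp (lam * (w i : ℝ)) - 1)
          ≤ ∑ i : ι, (if w i ≠ 0 then Real.exp (lam * (Wm : ℝ)) - 1 else 0) :=
            Finset.sum_le_sum (fun i _ => hptwise i)
        _ = (((univ : Finset ι).filter (fun i => w i ≠ 0)).card : ℝ) *
            (Real.exp (lam * (Wm : ℝ)) - 1) := by
            rw [← Finset.sum_filter, Finset.sum_const, nsmul_eq_mul]
    have hcard : (((univ : Finset ι).filter (fun i => w i ≠ 0)).card : ℝ) ≤ N := by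
      rw [hN]; exact_mod_cast hsupp
    rw [← Finset.sum_div]
    rw [div_le_iff₀ hA]
    calc ∑ i : ι, (Real.exp (lam * (w i : ℝ)) - 1)
        ≤ (((univ : Finset ι).filter (fun i => w i ≠ 0)).card : ℝ) *
          (Real.exp (lam * (Wm : ℝ)) - 1) := hsum2
      _ ≤ N * (Real.exp (lam * (Wm : ℝ)) - 1) := mul_le_mul_of_nonneg_right hcard hE1
      _ = (Real.exp (lam * (Wm : ℝ)) - 1) * N := by ring
  have prodbound : ∏ i : ι, (N + (Real.exp (lam * (w i : ℝ)) - 1))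
      ≤ (Fintype.card (ι → A) : ℝ) * Real.exp (Real.exp (lam * (Wm : ℝ)) - 1) := by
    calc ∏ i : ι, (N + (Real.exp (lam * (w i : ℝ)) - 1))
        ≤ ∏ i : ι, (N * Real.exp ((Real.exp (lam * (w i : ℝ)) - 1) / N)) := by
          apply Finset.prod_le_prod
          · intro i _
            have := hei i; linarith
          · intro i _; exact hterm i
      _ = N ^ (Fintype.card ι) * Real.exp (∑ i : ι, (Real.exp (lam * (w i : ℝ)) - 1) / N) := by
          rw [Finset.prod_mul_distrib, Finset.prod_const, Real.exp_sum, card_univ]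
      _ ≤ N ^ (Fintype.card ι) * Real.exp (Real.exp (lam * (Wm : ℝ)) - 1) := by
          apply mul_le_mul_of_nonneg_left (Real.exp_le_exp.2 sumbound) (by positivity)
      _ = (Fintype.card (ι → A) : ℝ) * Real.exp (Real.exp (lam * (Wm : ℝ)) - 1) := by
          rw [Fintype.card_fun, hN]
          push_cast
          ring
  calc (((univ : Finset (ι → A)).filter (fun h : ι → A => τ ≤ Sf h)).card : ℝ)
      ≤ ∑ h : ι → A, Real.exp (lam * (Sf h - τ)) := step1
    _ = Real.exp (-(lam * τ)) * ∏ i : ι, (∑ a : A, Real.exp (lam * (w i : ℝ) *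
          (if a = u then 1 else 0))) := step2
    _ = Real.exp (-(lam * τ)) * ∏ i : ι, (N + (Real.exp (lam * (w i : ℝ)) - 1)) := by
        rw [Finset.prod_congr rfl (fun i _ => inner i)]
    _ ≤ Real.exp (-(lam * τ)) * ((Fintype.card (ι → A) : ℝ) *
          Real.exp (Real.exp (lam * (Wm : ℝ)) - 1)) :=
        mul_le_mul_of_nonneg_left prodbound (Real.exp_pos _).le
    _ = Real.exp (Real.exp (lam * (Wm : ℝ)) - 1 - lam * τ) * (Fintype.card (ι → A) : ℝ) := by
        rw [show Real.exp (lam * (Wm:ℝ)) - 1 - lam * τ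
              = -(lam * τ) + (Real.exp (lam * (Wm:ℝ)) - 1) by ring, Real.exp_add]
        ring

set_option maxHeartbeats 2000000 in
/-- For perfectly correct `Sh` and fixed randomness `y`, with probability at least
`1 - 3r·e^{b - α²·2^{min(b/r, (β-1/r)b)}}` over uniformly and independently random
`f, g : {0,1}^ℓ → {0,1}^b`, the distribution `(f(Z₁), g(Z₂))` of
`(Z₁,Z₂) = Sh(U_b, y)` is `(2α + r·2^{-(1-β-1/r)b})`-close to a
`(2b, (β-1/r)·b - 4·log₂(1/α))`-source. -/
theorem random_leakage_condenses
    (α β : ℝ) (hα0 : 0 < α) (hα1 : α < 1) (hβ0 : 0 < β) (hβ1 : β < 1)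
    (r : ℕ) (hr : 0 < r)
    (b d ℓ : ℕ) (Sh : BS b → BS d → BS ℓ × BS ℓ)
    (hcorrect : ∃ Rec : BS ℓ × BS ℓ → BS b, ∀ x y, Rec (Sh x y) = x)
    (y : BS d) :
    1 - 3 * (r:ℝ) *
        Real.exp ((b:ℝ) - α ^ 2 *
          (2:ℝ) ^ (min ((b:ℝ) / (r:ℝ)) ((β - 1 / (r:ℝ)) * (b:ℝ)))) ≤
      ((Finset.univ.filter (fun fg : (BS ℓ → BS b) × (BS ℓ → BS b) =>
          ∃ W : BS b × BS b → ℝ, IsDist W ∧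
            (∀ w, W w ≤
              (2:ℝ) ^ (-((β - 1 / (r:ℝ)) * (b:ℝ) - 4 * Real.logb 2 (1 / α)))) ∧
            statDist (push (fun x => (fg.1 (Sh x y).1, fg.2 (Sh x y).2)) (unif b)) W ≤
              2 * α + (r:ℝ) * (2:ℝ) ^ (-((1 - β - 1 / (r:ℝ)) * (b:ℝ))))).card : ℝ) /
        ((Finset.univ : Finset ((BS ℓ → BS b) × (BS ℓ → BS b))).card : ℝ) := by
    classical
  obtain ⟨Rec, hRec⟩ := hcorrect
  have hinj : Function.Injective (fun x : BS b => Sh x y) := by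
    intro x x' h
    have h1 := hRec x y
    simp only at h
    rw [h, hRec x' y] at h1
    exact h1.symm
  have hr1 : (1:ℝ) ≤ (r:ℝ) := by exact_mod_cast hr
  have hb0 : (0:ℝ) ≤ (b:ℝ) := by positivity
  set mexp : ℝ := min ((b:ℝ) / (r:ℝ)) ((β - 1 / (r:ℝ)) * (b:ℝ)) with hmexp
  set E : ℝ := α ^ 2 * (2:ℝ) ^ mexp with hEdef
  set kk : ℝ := (β - 1 / (r:ℝ)) * (b:ℝ) - 4 * Real.logb 2 (1 / α) with hkk
  set εt : ℝ := 2 * α + (r:ℝ) * (2:ℝ) ^ (-((1 - β - 1 / (r:ℝ)) * (b:ℝ))) with hεt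
  set GoodPred : (BS ℓ → BS b) × (BS ℓ → BS b) → Prop := fun fg =>
    ∃ W : BS b × BS b → ℝ, IsDist W ∧
      (∀ w, W w ≤ (2:ℝ) ^ (-kk)) ∧
      statDist (push (fun x => (fg.1 (Sh x y).1, fg.2 (Sh x y).2)) (unif b)) W ≤ εt
    with hGoodPred
  have hNpos : (0:ℝ) < ((Finset.univ : Finset ((BS ℓ → BS b) × (BS ℓ → BS b))).card : ℝ) := by
    have h1 : (0:ℕ) < (Finset.univ : Finset ((BS ℓ → BS b) × (BS ℓ → BS b))).card :=
      Finset.card_pos.2 ⟨((fun _ _ => false), (fun _ _ => false)), mem_univ _⟩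
    exact_mod_cast h1
  suffices hbad : (((Finset.univ : Finset ((BS ℓ → BS b) × (BS ℓ → BS b))).filter
        (fun fg => ¬ GoodPred fg)).card : ℝ)
      ≤ (3 * (r:ℝ) * Real.exp ((b:ℝ) - E)) *
        ((Finset.univ : Finset ((BS ℓ → BS b) × (BS ℓ → BS b))).card : ℝ) by
    have hsplit : (((Finset.univ : Finset ((BS ℓ → BS b) × (BS ℓ → BS b))).filter
          GoodPred).card : ℝ)
        + (((Finset.univ : Finset ((BS ℓ → BS b) × (BS ℓ → BS b))).filter
          (fun fg => ¬ GoodPred fg)).card : ℝ)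
        = ((Finset.univ : Finset ((BS ℓ → BS b) × (BS ℓ → BS b))).card : ℝ) := by
      exact_mod_cast Finset.card_filter_add_card_filter_not (p := GoodPred)
    rw [le_div_iff₀ hNpos]
    nlinarith [hbad, hsplit]
  -- Trivial case: the claimed probability bound is vacuous
  by_cases h0 : (1:ℝ) ≤ 3 * (r:ℝ) * Real.exp ((b:ℝ) - E)
  · calc (((Finset.univ : Finset ((BS ℓ → BS b) × (BS ℓ → BS b))).filter
          (fun fg => ¬ GoodPred fg)).card : ℝ)
        ≤ ((Finset.univ : Finset ((BS ℓ → BS b) × (BS ℓ → BS b))).card : ℝ) := by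
          exact_mod_cast Finset.card_filter_le _ _
      _ ≤ (3 * (r:ℝ) * Real.exp ((b:ℝ) - E)) *
          ((Finset.univ : Finset ((BS ℓ → BS b) × (BS ℓ → BS b))).card : ℝ) := by
          nlinarith [hNpos]
  push_neg at h0
  -- Trivial case: the distance bound is vacuous
  by_cases h1 : (1:ℝ) ≤ εt
  · have hall : ∀ fg : (BS ℓ → BS b) × (BS ℓ → BS b), GoodPred fg := by
      intro fg
      have hkk2b : kk ≤ 2 * (b:ℝ) := by
        have hlogb0 : 0 ≤ Real.logb 2 (1/α) := by
          apply Real.logb_nonneg one_lt_two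
          rw [le_div_iff₀ hα0]
          linarith
        have hβr : (β - 1/(r:ℝ)) * (b:ℝ) ≤ 1 * (b:ℝ) := by
          apply mul_le_mul_of_nonneg_right _ hb0
          have : 0 < 1/(r:ℝ) := by positivity
          linarith
        rw [hkk]
        linarith
      have hWb : ∀ w : BS b × BS b, ((2:ℝ) ^ (2*b))⁻¹ ≤ (2:ℝ) ^ (-kk) := by
        intro w
        have he : ((2:ℝ) ^ (2*b))⁻¹ = (2:ℝ) ^ (-((2*b : ℕ):ℝ)) := by
          rw [← Real.rpow_natCast 2 (2*b), ← Real.rpow_neg (by norm_num : (0:ℝ) ≤ 2)]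
        rw [he]
        apply (Real.rpow_le_rpow_left_iff one_lt_two).2
        push_cast
        linarith
      have hWdist : IsDist (fun _ : BS b × BS b => ((2:ℝ) ^ (2*b))⁻¹) := by
        constructor
        · intro s; positivity
        · rw [Finset.sum_const, card_univ, Fintype.card_prod, cardBS, nsmul_eq_mul]
          push_cast
          rw [← pow_add, ← two_mul]
          field_simp
      refine ⟨fun _ => ((2:ℝ) ^ (2*b))⁻¹, hWdist, hWb, ?_⟩
      calc statDist (push (fun x => (fg.1 (Sh x y).1, fg.2 (Sh x y).2)) (unif b))
            (fun _ => ((2:ℝ) ^ (2*b))⁻¹)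
          ≤ 1 := statDist_le_one (push_isDist _ _ (isDist_unif b)) hWdist
        _ ≤ εt := h1
    have hempty : ((Finset.univ : Finset ((BS ℓ → BS b) × (BS ℓ → BS b))).filter
        (fun fg => ¬ GoodPred fg)) = ∅ := by
      apply Finset.filter_eq_empty_iff.2
      intro fg _
      exact not_not_intro (hall fg)
    rw [hempty]
    simp only [Finset.card_empty, Nat.cast_zero]
    have h3 : (0:ℝ) ≤ 3 * (r:ℝ) * Real.exp ((b:ℝ) - E) := by positivity
    nlinarith [hNpos]
  push_neg at h1
  -- Main case: derive basic parameter facts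
  have hα2 : α < 1/2 := by
    by_contra hc
    push_neg at hc
    have hpos : 0 < (r:ℝ) * (2:ℝ) ^ (-((1 - β - 1/(r:ℝ)) * (b:ℝ))) := by positivity
    rw [hεt] at h1
    linarith
  have hβ2 : β ≤ 1 - 1/(r:ℝ) := by
    by_contra hc
    push_neg at hc
    have hge : (1:ℝ) ≤ (2:ℝ) ^ (-((1 - β - 1/(r:ℝ)) * (b:ℝ))) := by
      rw [show (1:ℝ) = (2:ℝ) ^ (0:ℝ) by rw [Real.rpow_zero]]
      apply (Real.rpow_le_rpow_left_iff one_lt_two).2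
      rw [Real.rpow_zero]
      have hnp : (1 - β - 1/(r:ℝ)) ≤ 0 := by linarith
      nlinarith
    have : (1:ℝ) ≤ (r:ℝ) * (2:ℝ) ^ (-((1 - β - 1/(r:ℝ)) * (b:ℝ))) := by
      nlinarith
    rw [hεt] at h1
    linarith
  have hE1 : (b:ℝ) + 1 < E := by
    have h3 : 3 * Real.exp ((b:ℝ) - E) ≤ 3 * (r:ℝ) * Real.exp ((b:ℝ) - E) := by
      nlinarith [Real.exp_pos ((b:ℝ) - E)]
    have h4 : Real.exp ((b:ℝ) - E) < 1/3 := by linarith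
    have h5 : (1:ℝ)/3 < Real.exp (-1) := by
      rw [Real.exp_neg]
      rw [show (1:ℝ)/3 = 3⁻¹ by norm_num]
      apply inv_strictAnti₀ (Real.exp_pos 1)
      have := Real.exp_one_lt_d9
      linarith
    have h6 : (b:ℝ) - E < -1 := by
      have := Real.exp_lt_exp.1 (h4.trans h5)
      exact this
    linarith
  have hE0 : (1:ℝ) ≤ E := by linarith
  have hEpos : (0:ℝ) < E := by linarith
  -- the count threshold
  set Cp : ℝ := (2:ℝ) ^ ((b:ℝ) - kk) with hCp
  set sC : ℝ := (2:ℝ) ^ (((b:ℝ) - kk)/2) with hsCdef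
  have hsCpos : 0 < sC := Real.rpow_pos_of_pos two_pos _
  have hsCsq : sC * sC = Cp := by
    rw [hsCdef, hCp, ← Real.rpow_add two_pos]
    ring_nf
  have hsC16E : 16 * E ≤ sC := by
    have hbk : mexp + 2 * Real.logb 2 (1/α) ≤ ((b:ℝ) - kk)/2 := by
      have hm1 : mexp ≤ (b:ℝ)/(r:ℝ) := min_le_left _ _
      have h3 : 2/(r:ℝ) ≤ 1 - β + 1/(r:ℝ) := by
        have h3a : 1/(r:ℝ) ≤ 1 - β := by linarith
        have h3b : 2/(r:ℝ) = 1/(r:ℝ) + 1/(r:ℝ) := by ring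
        linarith
      have h2 : (b:ℝ)/(r:ℝ) ≤ (1 - (β - 1/(r:ℝ))) * (b:ℝ) / 2 := by
        have h4 : (2/(r:ℝ)) * (b:ℝ) ≤ (1 - β + 1/(r:ℝ)) * (b:ℝ) :=
          mul_le_mul_of_nonneg_right h3 hb0
        have h5 : (b:ℝ)/(r:ℝ) = (2/(r:ℝ)) * (b:ℝ) / 2 := by ring
        rw [h5]
        linarith
      have h4 : ((b:ℝ) - kk)/2 = (1 - (β - 1/(r:ℝ))) * (b:ℝ)/2 + 2 * Real.logb 2 (1/α) := by
        rw [hkk]; ring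
      linarith
    have h5 : (2:ℝ) ^ (mexp + 2*Real.logb 2 (1/α)) ≤ sC := by
      rw [hsCdef]
      exact (Real.rpow_le_rpow_left_iff one_lt_two).2 hbk
    have h6 : (2:ℝ) ^ (mexp + 2*Real.logb 2 (1/α)) = (2:ℝ)^mexp * (1/α)^2 := by
      rw [Real.rpow_add two_pos]
      congr 1
      rw [show (2:ℝ)*Real.logb 2 (1/α) = Real.logb 2 (1/α) * ((2:ℕ):ℝ) by push_cast; ring]
      rw [Real.rpow_mul (by norm_num : (0:ℝ) ≤ 2), Real.rpow_natCast,
        Real.rpow_logb two_pos (by norm_num) (by positivity)]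
    have h7 : 16 * E ≤ (2:ℝ)^mexp * (1/α)^2 := by
      rw [hEdef]
      have h2m : 0 < (2:ℝ)^mexp := Real.rpow_pos_of_pos two_pos _
      have h8 : 16 * α^2 ≤ (1/α)^2 := by
        have h9 : (2:ℝ) ≤ 1/α := by
          rw [le_div_iff₀ hα0]; linarith
        have h10 : α^2 ≤ (1/2)^2 := by nlinarith
        nlinarith
      nlinarith
    linarith [h6 ▸ h5]
  have hsC16 : (16:ℝ) ≤ sC := by nlinarith
  set γ : ℕ := ⌈sC⌉₊ with hγdef
  have hγ1 : sC ≤ (γ:ℝ) := Nat.le_ceil sC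
  have hγ2 : (γ:ℝ) < sC + 1 := Nat.ceil_lt_add_one hsCpos.le
  have hγpos : (0:ℝ) < (γ:ℝ) := lt_of_lt_of_le hsCpos hγ1
  have hγne : (γ:ℝ) ≠ 0 := ne_of_gt hγpos
  set q : ℝ := Cp / (γ:ℝ) with hqdef
  have hq1 : (16/17) * sC ≤ q := by
    rw [hqdef, ← hsCsq, le_div_iff₀ hγpos]
    nlinarith
  have hq15 : 15 ≤ q := by nlinarith
  have hqEb : E + (b:ℝ) ≤ q := by nlinarith
  have hqpos : (0:ℝ) < q := by linarith
  have hexp2lt : Real.exp 2 < 15 := by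
    have h := Real.exp_one_lt_d9
    have h2 : Real.exp 2 = Real.exp 1 * Real.exp 1 := by
      rw [← Real.exp_add]; norm_num
    nlinarith [Real.exp_pos 1]
  have hlogq : 2 ≤ Real.log q := by
    rw [Real.le_log_iff_exp_le hqpos]
    linarith
  have hlogγ : 2 ≤ Real.log ((γ:ℝ) + 1) := by
    rw [Real.le_log_iff_exp_le (by linarith)]
    linarith
  have hlog2 : Real.log 2 ≤ 1 := by
    have := Real.log_two_lt_d9
    linarith
  have hcardBSb : ((2:ℕ)^b : ℝ) = Real.exp ((b:ℝ) * Real.log 2) := by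
    rw [show ((b:ℝ) * Real.log 2) = ((b:ℕ):ℝ) * Real.log 2 by norm_num,
      Real.exp_nat_mul, Real.exp_log two_pos]
    push_cast
    rfl
  -- the two numeric bounds
  have HFnum : ((2:ℕ)^b : ℝ) * Real.exp (q - 1 - Real.log q * q) ≤ Real.exp ((b:ℝ) - E) := by
    rw [hcardBSb, ← Real.exp_add]
    apply Real.exp_le_exp.2
    have hq2 : 2*q ≤ Real.log q * q := by nlinarith
    have hb2 : (b:ℝ) * Real.log 2 ≤ (b:ℝ) := by nlinarith
    linarith
  have HGnum : ((2:ℕ)^b : ℝ) * (((2:ℕ)^b : ℝ) * Real.exp (((γ:ℝ)+1) - 1 -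
      Real.log ((γ:ℝ)+1) * ((γ:ℝ)+1))) ≤ Real.exp ((b:ℝ) - E) := by
    rw [hcardBSb, ← Real.exp_add, ← Real.exp_add]
    apply Real.exp_le_exp.2
    have hg2 : 2*((γ:ℝ)+1) ≤ Real.log ((γ:ℝ)+1) * ((γ:ℝ)+1) := by nlinarith
    have hb2 : (b:ℝ) * Real.log 2 ≤ (b:ℝ) := by nlinarith
    have hγEb : E + (b:ℝ) ≤ (γ:ℝ) := by nlinarith
    linarith
  -- fiber data
  set D : BS ℓ → ℕ := fun t => ((Finset.univ : Finset (BS b)).filter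
    (fun x => (Sh x y).1 = t)).card with hDdef
  set S2 : BS ℓ → Finset (BS ℓ) := fun t => ((Finset.univ : Finset (BS b)).filter
    (fun x => (Sh x y).1 = t)).image (fun x => (Sh x y).2) with hS2def
  set w1 : BS ℓ → ℕ := fun t => min (D t) γ with hw1def
  set w2 : BS ℓ → BS ℓ → ℕ := fun t t2 => if t2 ∈ S2 t then 1 else 0 with hw2def
  -- a good pair of functions
  have hgood : ∀ f g : BS ℓ → BS b,
      (∀ u, (∑ t, (w1 t : ℝ) * (if f t = u then 1 else 0)) < Cp) →
      (∀ t, D t ≠ 0 → ∀ v, (∑ t2, (w2 t t2 : ℝ) * (if g t2 = v then 1 else 0)) < (γ:ℝ) + 1) →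
      GoodPred (f, g) := by
    intro f g hf hg
    simp only [hGoodPred]
    refine ⟨push (fun x => (f (Sh x y).1, g (Sh x y).2)) (unif b),
      push_isDist _ _ (isDist_unif b), ?_, ?_⟩
    · rintro ⟨u, v⟩
      set cS : Finset (BS b) := (Finset.univ.filter
        (fun x => (f (Sh x y).1, g (Sh x y).2) = (u, v))) with hcS
      have hpush : push (fun x => (f (Sh x y).1, g (Sh x y).2)) (unif b) (u, v)
          = (cS.card : ℝ) * (1 / 2 ^ b) := by
        unfold push unif
        rw [← Finset.sum_filter, Finset.sum_const, nsmul_eq_mul]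
      have hcount : (cS.card : ℝ) ≤ ∑ t, (w1 t : ℝ) * (if f t = u then 1 else 0) := by
        have hfib : cS.card = ∑ t : BS ℓ, (cS.filter (fun x => (Sh x y).1 = t)).card :=
          Finset.card_eq_sum_card_fiberwise (fun x _ => mem_univ ((Sh x y).1))
        rw [hfib]
        push_cast
        apply Finset.sum_le_sum
        intro t _
        by_cases hft : f t = u
        · simp only [hft, if_true, mul_one]
          have hle1 : (cS.filter (fun x => (Sh x y).1 = t)).card ≤ D t := by
            simp only [hDdef]
            apply Finset.card_le_card
            intro x hx
            simp only [hcS, Finset.mem_filter] at hx ⊢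
            exact ⟨mem_univ _, hx.2⟩
          have hle2 : (cS.filter (fun x => (Sh x y).1 = t)).card ≤ γ := by
            rcases Finset.eq_empty_or_nonempty (cS.filter (fun x => (Sh x y).1 = t)) with he | hne
            · simp [he]
            · obtain ⟨x0, hx0⟩ := hne
              have hx0' := hx0
              simp only [hcS, Finset.mem_filter] at hx0'
              have hD0 : D t ≠ 0 := by
                simp only [hDdef]
                apply Finset.card_ne_zero_of_mem (a := x0)
                rw [Finset.mem_filter]
                exact ⟨mem_univ _, hx0'.2⟩
              have hinj2 : Set.InjOn (fun x => (Sh x y).2)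
                  (cS.filter (fun x => (Sh x y).1 = t)) := by
                intro a ha a' ha' hz
                simp only [Finset.coe_filter, Set.mem_setOf_eq, hcS, Finset.mem_filter] at ha ha'
                apply hinj
                simp only
                exact Prod.ext (ha.2.trans ha'.2.symm) hz
              have hmap : ∀ x ∈ cS.filter (fun x => (Sh x y).1 = t),
                  (Sh x y).2 ∈ (S2 t).filter (fun t2 => g t2 = v) := by
                intro x hx
                simp only [hcS, Finset.mem_filter] at hx
                rw [Finset.mem_filter]
                constructor
                · simp only [hS2def]
                  rw [Finset.mem_image]
                  exact ⟨x, by rw [Finset.mem_filter]; exact ⟨mem_univ _, hx.2⟩, rfl⟩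
                · have := hx.1.2
                  have h2 := congrArg Prod.snd this
                  simpa using h2
              have hcard2 : (cS.filter (fun x => (Sh x y).1 = t)).card
                  ≤ ((S2 t).filter (fun t2 => g t2 = v)).card :=
                Finset.card_le_card_of_injOn _ hmap hinj2
              have hCGeq : (∑ t2, (w2 t t2 : ℝ) * (if g t2 = v then 1 else 0))
                  = (((S2 t).filter (fun t2 => g t2 = v)).card : ℝ) := by
                have hpt : ∀ t2 : BS ℓ, (w2 t t2 : ℝ) * (if g t2 = v then 1 else 0)
                    = (if t2 ∈ S2 t ∧ g t2 = v then (1:ℝ) else 0) := by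
                  intro t2
                  simp only [hw2def]
                  by_cases h2 : t2 ∈ S2 t <;> by_cases h3 : g t2 = v <;> simp [h2, h3]
                rw [Finset.sum_congr rfl (fun t2 _ => hpt t2), Finset.sum_boole]
                congr 1
                have : (Finset.univ.filter (fun t2 => t2 ∈ S2 t ∧ g t2 = v))
                    = (S2 t).filter (fun t2 => g t2 = v) := by
                  ext t2
                  simp [Finset.mem_filter]
                rw [this]
              have hlt := hg t hD0 v
              rw [hCGeq] at hlt
              have : (((S2 t).filter (fun t2 => g t2 = v)).card : ℝ) < (γ:ℝ) + 1 := hlt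
              have hle3 : ((S2 t).filter (fun t2 => g t2 = v)).card ≤ γ := by
                have := this
                exact_mod_cast Nat.lt_succ_iff.1 (by exact_mod_cast (by push_cast at this ⊢; linarith : (((S2 t).filter (fun t2 => g t2 = v)).card : ℝ) < ((γ + 1 : ℕ) : ℝ)))
              exact le_trans hcard2 hle3
          simp only [hw1def]
          exact_mod_cast le_min hle1 hle2
        · simp only [hft, if_false, mul_zero]
          have hemp : cS.filter (fun x => (Sh x y).1 = t) = ∅ := by
            rw [Finset.filter_eq_empty_iff]
            intro x hx
            simp only [hcS, Finset.mem_filter] at hx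
            intro hxt
            apply hft
            have h2 := congrArg Prod.fst hx.2
            simp only at h2
            rw [hxt] at h2
            exact h2
          rw [hemp]
          simp
      rw [hpush]
      have hCp2 : Cp * (1/(2:ℝ)^b) = (2:ℝ)^(-kk) := by
        rw [hCp]
        rw [show (1/(2:ℝ)^b) = (2:ℝ)^(-(b:ℝ)) by
          rw [one_div, ← Real.rpow_natCast 2 b, ← Real.rpow_neg (by norm_num : (0:ℝ) ≤ 2)]]
        rw [← Real.rpow_add two_pos]
        ring_nf
      calc (cS.card : ℝ) * (1 / 2 ^ b)
          ≤ Cp * (1 / 2 ^ b) := by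
            apply mul_le_mul_of_nonneg_right (le_of_lt (lt_of_le_of_lt hcount (hf u)))
            positivity
        _ = (2:ℝ)^(-kk) := hCp2
    · have hzero : statDist (push (fun x => (f (Sh x y).1, g (Sh x y).2)) (unif b))
          (push (fun x => (f (Sh x y).1, g (Sh x y).2)) (unif b)) = 0 := by
        unfold statDist
        simp
      rw [hzero, hεt]
      positivity
  -- bad events and union bound
  have hsubset : ((Finset.univ : Finset ((BS ℓ → BS b) × (BS ℓ → BS b))).filter
      (fun fg => ¬ GoodPred fg)) ⊆
      ((Finset.univ.filter (fun fg : (BS ℓ → BS b) × (BS ℓ → BS b) =>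
          ∃ u, Cp ≤ ∑ t, (w1 t : ℝ) * (if fg.1 t = u then 1 else 0))) ∪
       (Finset.univ.filter (fun fg : (BS ℓ → BS b) × (BS ℓ → BS b) =>
          ∃ t, D t ≠ 0 ∧ ∃ v, (γ:ℝ) + 1 ≤ ∑ t2, (w2 t t2 : ℝ) * (if fg.2 t2 = v then 1 else 0)))) := by
    intro fg hfg
    rw [Finset.mem_filter] at hfg
    rw [Finset.mem_union, Finset.mem_filter, Finset.mem_filter]
    by_cases hF : ∃ u, Cp ≤ ∑ t, (w1 t : ℝ) * (if fg.1 t = u then 1 else 0)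
    · exact Or.inl ⟨mem_univ _, hF⟩
    by_cases hG : ∃ t, D t ≠ 0 ∧ ∃ v, (γ:ℝ) + 1 ≤ ∑ t2, (w2 t t2 : ℝ) *
        (if fg.2 t2 = v then 1 else 0)
    · exact Or.inr ⟨mem_univ _, hG⟩
    exfalso
    apply hfg.2
    push_neg at hF hG
    have hres := hgood fg.1 fg.2 hF hG
    rwa [Prod.mk.eta] at hres
  -- product structure of the two bad events
  have hprodF : (Finset.univ.filter (fun fg : (BS ℓ → BS b) × (BS ℓ → BS b) =>
        ∃ u, Cp ≤ ∑ t, (w1 t : ℝ) * (if fg.1 t = u then 1 else 0)))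
      = (Finset.univ.filter (fun f : BS ℓ → BS b =>
          ∃ u, Cp ≤ ∑ t, (w1 t : ℝ) * (if f t = u then 1 else 0)))
        ×ˢ (Finset.univ : Finset (BS ℓ → BS b)) := by
    ext fg
    simp [Finset.mem_product, Finset.mem_filter]
  have hprodG : (Finset.univ.filter (fun fg : (BS ℓ → BS b) × (BS ℓ → BS b) =>
        ∃ t, D t ≠ 0 ∧ ∃ v, (γ:ℝ) + 1 ≤ ∑ t2, (w2 t t2 : ℝ) * (if fg.2 t2 = v then 1 else 0)))
      = (Finset.univ : Finset (BS ℓ → BS b)) ×ˢ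
        (Finset.univ.filter (fun g : BS ℓ → BS b =>
          ∃ t, D t ≠ 0 ∧ ∃ v, (γ:ℝ) + 1 ≤ ∑ t2, (w2 t t2 : ℝ) * (if g t2 = v then 1 else 0))) := by
    ext fg
    simp [Finset.mem_product, Finset.mem_filter]
  -- counting the F-side bad functions
  have hw1le : ∀ t, w1 t ≤ γ := by
    intro t
    simp only [hw1def]
    exact min_le_right _ _
  have hsupp1 : ((Finset.univ : Finset (BS ℓ)).filter (fun t => w1 t ≠ 0)).card
      ≤ Fintype.card (BS b) := by
    have hsub : ((Finset.univ : Finset (BS ℓ)).filter (fun t => w1 t ≠ 0)) ⊆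
        (Finset.univ : Finset (BS b)).image (fun x => (Sh x y).1) := by
      intro t ht
      rw [Finset.mem_filter] at ht
      have hD : D t ≠ 0 := by
        intro hD0
        apply ht.2
        simp only [hw1def, hD0]
        simp
      have hne : ((Finset.univ : Finset (BS b)).filter (fun x => (Sh x y).1 = t)).Nonempty := by
        rw [Finset.nonempty_iff_ne_empty]
        intro he
        apply hD
        simp only [hDdef, he, Finset.card_empty]
      obtain ⟨x, hx⟩ := hne
      rw [Finset.mem_filter] at hx
      rw [Finset.mem_image]
      exact ⟨x, mem_univ x, hx.2⟩
    calc ((Finset.univ : Finset (BS ℓ)).filter (fun t => w1 t ≠ 0)).card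
        ≤ ((Finset.univ : Finset (BS b)).image (fun x => (Sh x y).1)).card :=
          Finset.card_le_card hsub
      _ ≤ (Finset.univ : Finset (BS b)).card := Finset.card_image_le
      _ = Fintype.card (BS b) := Finset.card_univ
  have hFcount : ∀ u : BS b,
      ((Finset.univ.filter (fun f : BS ℓ → BS b =>
        Cp ≤ ∑ t, (w1 t : ℝ) * (if f t = u then 1 else 0))).card : ℝ)
      ≤ Real.exp (q - 1 - Real.log q * q) * (Fintype.card (BS ℓ → BS b) : ℝ) := by
    intro u
    have hlam : (0:ℝ) ≤ Real.log q / (γ:ℝ) := div_nonneg (by linarith) hγpos.le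
    have happ := mgf_count w1 γ hw1le hsupp1 u Cp (Real.log q / (γ:ℝ)) hlam
    have he1 : Real.log q / (γ:ℝ) * (γ:ℝ) = Real.log q := div_mul_cancel₀ _ hγne
    have he2 : Real.log q / (γ:ℝ) * Cp = Real.log q * q := by
      rw [hqdef]
      field_simp
    rw [he1, Real.exp_log hqpos, he2] at happ
    exact happ
  have hFbound : ((Finset.univ.filter (fun f : BS ℓ → BS b =>
        ∃ u, Cp ≤ ∑ t, (w1 t : ℝ) * (if f t = u then 1 else 0))).card : ℝ)
      ≤ ((2:ℕ)^b : ℝ) * (Real.exp (q - 1 - Real.log q * q) *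
        (Fintype.card (BS ℓ → BS b) : ℝ)) := by
    have hsub : (Finset.univ.filter (fun f : BS ℓ → BS b =>
        ∃ u, Cp ≤ ∑ t, (w1 t : ℝ) * (if f t = u then 1 else 0)))
        ⊆ (Finset.univ : Finset (BS b)).biUnion (fun u =>
          Finset.univ.filter (fun f : BS ℓ → BS b =>
            Cp ≤ ∑ t, (w1 t : ℝ) * (if f t = u then 1 else 0))) := by
      intro f hf
      rw [Finset.mem_filter] at hf
      obtain ⟨u, hu⟩ := hf.2
      rw [Finset.mem_biUnion]
      exact ⟨u, mem_univ u, Finset.mem_filter.2 ⟨mem_univ f, hu⟩⟩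
    calc ((Finset.univ.filter (fun f : BS ℓ → BS b =>
          ∃ u, Cp ≤ ∑ t, (w1 t : ℝ) * (if f t = u then 1 else 0))).card : ℝ)
        ≤ ((((Finset.univ : Finset (BS b)).biUnion (fun u =>
            Finset.univ.filter (fun f : BS ℓ → BS b =>
              Cp ≤ ∑ t, (w1 t : ℝ) * (if f t = u then 1 else 0)))).card) : ℝ) := by
          exact_mod_cast Finset.card_le_card hsub
      _ ≤ ∑ u : BS b, ((Finset.univ.filter (fun f : BS ℓ → BS b =>
            Cp ≤ ∑ t, (w1 t : ℝ) * (if f t = u then 1 else 0))).card : ℝ) := by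
          exact_mod_cast Finset.card_biUnion_le
      _ ≤ ∑ _u : BS b, Real.exp (q - 1 - Real.log q * q) *
            (Fintype.card (BS ℓ → BS b) : ℝ) :=
          Finset.sum_le_sum (fun u _ => hFcount u)
      _ = ((2:ℕ)^b : ℝ) * (Real.exp (q - 1 - Real.log q * q) *
            (Fintype.card (BS ℓ → BS b) : ℝ)) := by
          rw [Finset.sum_const, card_univ, cardBS, nsmul_eq_mul]
          push_cast
          ring
  -- counting the G-side bad functions
  have hw2le : ∀ t t2, w2 t t2 ≤ 1 := by
    intro t t2
    simp only [hw2def]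
    by_cases h : t2 ∈ S2 t
    · simp [h]
    · simp [h]
  have hsupp2 : ∀ t, ((Finset.univ : Finset (BS ℓ)).filter (fun t2 => w2 t t2 ≠ 0)).card
      ≤ Fintype.card (BS b) := by
    intro t
    have heq : ((Finset.univ : Finset (BS ℓ)).filter (fun t2 => w2 t t2 ≠ 0)) = S2 t := by
      ext t2
      simp only [Finset.mem_filter, mem_univ, true_and, hw2def]
      by_cases h : t2 ∈ S2 t
      · simp [h]
      · simp [h]
    rw [heq]
    calc (S2 t).card
        ≤ ((Finset.univ : Finset (BS b)).filter (fun x => (Sh x y).1 = t)).card := by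
          simp only [hS2def]
          exact Finset.card_image_le
      _ ≤ (Finset.univ : Finset (BS b)).card := Finset.card_filter_le _ _
      _ = Fintype.card (BS b) := Finset.card_univ
  have hGcount : ∀ (t : BS ℓ) (v : BS b),
      ((Finset.univ.filter (fun g : BS ℓ → BS b =>
        (γ:ℝ) + 1 ≤ ∑ t2, (w2 t t2 : ℝ) * (if g t2 = v then 1 else 0))).card : ℝ)
      ≤ Real.exp (((γ:ℝ)+1) - 1 - Real.log ((γ:ℝ)+1) * ((γ:ℝ)+1)) *
        (Fintype.card (BS ℓ → BS b) : ℝ) := by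
    intro t v
    have hγ1pos : (0:ℝ) < (γ:ℝ) + 1 := by linarith
    have hlam : (0:ℝ) ≤ Real.log ((γ:ℝ) + 1) := by linarith
    have happ := mgf_count (w2 t) 1 (hw2le t) (hsupp2 t) v ((γ:ℝ) + 1)
      (Real.log ((γ:ℝ) + 1)) hlam
    have he1 : Real.log ((γ:ℝ) + 1) * ((1:ℕ):ℝ) = Real.log ((γ:ℝ) + 1) := by
      push_cast
      ring
    rw [he1, Real.exp_log hγ1pos] at happ
    exact happ
  have hsuppD : ((Finset.univ : Finset (BS ℓ)).filter (fun t => D t ≠ 0)).card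
      ≤ Fintype.card (BS b) := by
    have hsub : ((Finset.univ : Finset (BS ℓ)).filter (fun t => D t ≠ 0)) ⊆
        (Finset.univ : Finset (BS b)).image (fun x => (Sh x y).1) := by
      intro t ht
      rw [Finset.mem_filter] at ht
      have hne : ((Finset.univ : Finset (BS b)).filter (fun x => (Sh x y).1 = t)).Nonempty := by
        rw [Finset.nonempty_iff_ne_empty]
        intro he
        apply ht.2
        simp only [hDdef, he, Finset.card_empty]
      obtain ⟨x, hx⟩ := hne
      rw [Finset.mem_filter] at hx
      rw [Finset.mem_image]
      exact ⟨x, mem_univ x, hx.2⟩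
    calc ((Finset.univ : Finset (BS ℓ)).filter (fun t => D t ≠ 0)).card
        ≤ ((Finset.univ : Finset (BS b)).image (fun x => (Sh x y).1)).card :=
          Finset.card_le_card hsub
      _ ≤ (Finset.univ : Finset (BS b)).card := Finset.card_image_le
      _ = Fintype.card (BS b) := Finset.card_univ
  have hGbound : ((Finset.univ.filter (fun g : BS ℓ → BS b =>
        ∃ t, D t ≠ 0 ∧ ∃ v, (γ:ℝ) + 1 ≤ ∑ t2, (w2 t t2 : ℝ) *
          (if g t2 = v then 1 else 0))).card : ℝ)
      ≤ ((2:ℕ)^b : ℝ) * (((2:ℕ)^b : ℝ) *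
        (Real.exp (((γ:ℝ)+1) - 1 - Real.log ((γ:ℝ)+1) * ((γ:ℝ)+1)) *
          (Fintype.card (BS ℓ → BS b) : ℝ))) := by
    have hsub : (Finset.univ.filter (fun g : BS ℓ → BS b =>
        ∃ t, D t ≠ 0 ∧ ∃ v, (γ:ℝ) + 1 ≤ ∑ t2, (w2 t t2 : ℝ) * (if g t2 = v then 1 else 0)))
        ⊆ ((Finset.univ : Finset (BS ℓ)).filter (fun t => D t ≠ 0)).biUnion (fun t =>
            (Finset.univ : Finset (BS b)).biUnion (fun v =>
              Finset.univ.filter (fun g : BS ℓ → BS b =>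
                (γ:ℝ) + 1 ≤ ∑ t2, (w2 t t2 : ℝ) * (if g t2 = v then 1 else 0)))) := by
      intro g hg
      rw [Finset.mem_filter] at hg
      obtain ⟨t, hDt, v, hv⟩ := hg.2
      rw [Finset.mem_biUnion]
      refine ⟨t, Finset.mem_filter.2 ⟨mem_univ t, hDt⟩, ?_⟩
      rw [Finset.mem_biUnion]
      exact ⟨v, mem_univ v, Finset.mem_filter.2 ⟨mem_univ g, hv⟩⟩
    set XG : ℝ := Real.exp (((γ:ℝ)+1) - 1 - Real.log ((γ:ℝ)+1) * ((γ:ℝ)+1)) *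
      (Fintype.card (BS ℓ → BS b) : ℝ) with hXG
    have hXG0 : 0 ≤ XG := by
      rw [hXG]; positivity
    calc ((Finset.univ.filter (fun g : BS ℓ → BS b =>
          ∃ t, D t ≠ 0 ∧ ∃ v, (γ:ℝ) + 1 ≤ ∑ t2, (w2 t t2 : ℝ) *
            (if g t2 = v then 1 else 0))).card : ℝ)
        ≤ ((((Finset.univ : Finset (BS ℓ)).filter (fun t => D t ≠ 0)).biUnion (fun t =>
            (Finset.univ : Finset (BS b)).biUnion (fun v =>
              Finset.univ.filter (fun g : BS ℓ → BS b =>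
                (γ:ℝ) + 1 ≤ ∑ t2, (w2 t t2 : ℝ) * (if g t2 = v then 1 else 0))))).card : ℝ) := by
          exact_mod_cast Finset.card_le_card hsub
      _ ≤ ∑ t ∈ (Finset.univ : Finset (BS ℓ)).filter (fun t => D t ≠ 0),
            (((Finset.univ : Finset (BS b)).biUnion (fun v =>
              Finset.univ.filter (fun g : BS ℓ → BS b =>
                (γ:ℝ) + 1 ≤ ∑ t2, (w2 t t2 : ℝ) * (if g t2 = v then 1 else 0)))).card : ℝ) := by
          exact_mod_cast Finset.card_biUnion_le
      _ ≤ ∑ t ∈ (Finset.univ : Finset (BS ℓ)).filter (fun t => D t ≠ 0),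
            (((2:ℕ)^b : ℝ) * XG) := by
          apply Finset.sum_le_sum
          intro t _
          calc (((Finset.univ : Finset (BS b)).biUnion (fun v =>
                Finset.univ.filter (fun g : BS ℓ → BS b =>
                  (γ:ℝ) + 1 ≤ ∑ t2, (w2 t t2 : ℝ) * (if g t2 = v then 1 else 0)))).card : ℝ)
              ≤ ∑ v : BS b, ((Finset.univ.filter (fun g : BS ℓ → BS b =>
                  (γ:ℝ) + 1 ≤ ∑ t2, (w2 t t2 : ℝ) * (if g t2 = v then 1 else 0))).card : ℝ) := by
                exact_mod_cast Finset.card_biUnion_le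
            _ ≤ ∑ _v : BS b, XG := Finset.sum_le_sum (fun v _ => hGcount t v)
            _ = ((2:ℕ)^b : ℝ) * XG := by
                rw [Finset.sum_const, card_univ, cardBS, nsmul_eq_mul]
                push_cast
                ring
      _ ≤ ((2:ℕ)^b : ℝ) * (((2:ℕ)^b : ℝ) * XG) := by
          rw [Finset.sum_const, nsmul_eq_mul]
          have hc : ((((Finset.univ : Finset (BS ℓ)).filter (fun t => D t ≠ 0)).card) : ℝ)
              ≤ ((2:ℕ)^b : ℝ) := by
            have h9 := hsuppD
            rw [cardBS] at h9
            exact_mod_cast h9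
          have h2 : (0:ℝ) ≤ ((2:ℕ)^b : ℝ) * XG := by positivity
          exact mul_le_mul_of_nonneg_right hc h2
  -- final assembly
  set Nf : ℝ := (Fintype.card (BS ℓ → BS b) : ℝ) with hNf
  have hNf0 : (0:ℝ) ≤ Nf := by rw [hNf]; positivity
  have hNuniv : ((Finset.univ : Finset ((BS ℓ → BS b) × (BS ℓ → BS b))).card : ℝ)
      = Nf * Nf := by
    rw [card_univ, Fintype.card_prod, hNf]
    push_cast
    ring
  have hXF0 : (0:ℝ) ≤ Real.exp (q - 1 - Real.log q * q) := (Real.exp_pos _).le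
  calc (((Finset.univ : Finset ((BS ℓ → BS b) × (BS ℓ → BS b))).filter
        (fun fg => ¬ GoodPred fg)).card : ℝ)
      ≤ (((Finset.univ.filter (fun fg : (BS ℓ → BS b) × (BS ℓ → BS b) =>
            ∃ u, Cp ≤ ∑ t, (w1 t : ℝ) * (if fg.1 t = u then 1 else 0))) ∪
          (Finset.univ.filter (fun fg : (BS ℓ → BS b) × (BS ℓ → BS b) =>
            ∃ t, D t ≠ 0 ∧ ∃ v, (γ:ℝ) + 1 ≤ ∑ t2, (w2 t t2 : ℝ) *
              (if fg.2 t2 = v then 1 else 0)))).card : ℝ) := by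
        exact_mod_cast Finset.card_le_card hsubset
    _ ≤ ((Finset.univ.filter (fun fg : (BS ℓ → BS b) × (BS ℓ → BS b) =>
            ∃ u, Cp ≤ ∑ t, (w1 t : ℝ) * (if fg.1 t = u then 1 else 0))).card : ℝ) +
        ((Finset.univ.filter (fun fg : (BS ℓ → BS b) × (BS ℓ → BS b) =>
            ∃ t, D t ≠ 0 ∧ ∃ v, (γ:ℝ) + 1 ≤ ∑ t2, (w2 t t2 : ℝ) *
              (if fg.2 t2 = v then 1 else 0))).card : ℝ) := by
        exact_mod_cast Finset.card_union_le _ _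
    _ = ((Finset.univ.filter (fun f : BS ℓ → BS b =>
            ∃ u, Cp ≤ ∑ t, (w1 t : ℝ) * (if f t = u then 1 else 0))).card : ℝ) * Nf +
        Nf * ((Finset.univ.filter (fun g : BS ℓ → BS b =>
            ∃ t, D t ≠ 0 ∧ ∃ v, (γ:ℝ) + 1 ≤ ∑ t2, (w2 t t2 : ℝ) *
              (if g t2 = v then 1 else 0))).card : ℝ) := by
        rw [hprodF, hprodG, Finset.card_product, Finset.card_product, hNf, ← card_univ]
        push_cast
        ring
    _ ≤ (((2:ℕ)^b : ℝ) * (Real.exp (q - 1 - Real.log q * q) * Nf)) * Nf +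
        Nf * (((2:ℕ)^b : ℝ) * (((2:ℕ)^b : ℝ) *
          (Real.exp (((γ:ℝ)+1) - 1 - Real.log ((γ:ℝ)+1) * ((γ:ℝ)+1)) * Nf))) := by
        apply add_le_add
        · apply mul_le_mul_of_nonneg_right _ hNf0
          rw [hNf]
          exact hFbound
        · apply mul_le_mul_of_nonneg_left _ hNf0
          rw [hNf]
          exact hGbound
    _ ≤ Real.exp ((b:ℝ) - E) * (Nf * Nf) + Real.exp ((b:ℝ) - E) * (Nf * Nf) := by
        have hNN : (0:ℝ) ≤ Nf * Nf := mul_nonneg hNf0 hNf0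
        apply add_le_add
        · calc (((2:ℕ)^b : ℝ) * (Real.exp (q - 1 - Real.log q * q) * Nf)) * Nf
              = (((2:ℕ)^b : ℝ) * Real.exp (q - 1 - Real.log q * q)) * (Nf * Nf) := by ring
            _ ≤ Real.exp ((b:ℝ) - E) * (Nf * Nf) := mul_le_mul_of_nonneg_right HFnum hNN
        · calc Nf * (((2:ℕ)^b : ℝ) * (((2:ℕ)^b : ℝ) *
                (Real.exp (((γ:ℝ)+1) - 1 - Real.log ((γ:ℝ)+1) * ((γ:ℝ)+1)) * Nf)))
              = (((2:ℕ)^b : ℝ) * (((2:ℕ)^b : ℝ) *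
                Real.exp (((γ:ℝ)+1) - 1 - Real.log ((γ:ℝ)+1) * ((γ:ℝ)+1)))) * (Nf * Nf) := by
                ring
            _ ≤ Real.exp ((b:ℝ) - E) * (Nf * Nf) := mul_le_mul_of_nonneg_right HGnum hNN
    _ = 2 * Real.exp ((b:ℝ) - E) * (Nf * Nf) := by ring
    _ ≤ (3 * (r:ℝ) * Real.exp ((b:ℝ) - E)) *
        ((Finset.univ : Finset ((BS ℓ → BS b) × (BS ℓ → BS b))).card : ℝ) := by
        rw [hNuniv]
        have hNN : (0:ℝ) ≤ Nf * Nf := mul_nonneg hNf0 hNf0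
        apply mul_le_mul_of_nonneg_right _ hNN
        have he := Real.exp_pos ((b:ℝ) - E)
        have h32 : (2:ℝ) ≤ 3 * (r:ℝ) := by linarith
        calc 2 * Real.exp ((b:ℝ) - E) ≤ 3 * (r:ℝ) * Real.exp ((b:ℝ) - E) :=
          mul_le_mul_of_nonneg_right h32 he.le
end

section
/- Fix an (n,k)-source X and ε > 0, and let m ≤ k − 2·log₂(1/ε). Then a uniformly random function F: {0,1}^n → {0,1}^m satisfies F(X) ≈_ε U_m with probability at least 1 − 2·e^{−ε²·2^k} over the choice of F. -/
open Finset
open scoped Classical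

/-! For a fixed test `A ⊆ {0,1}^m`, the excess mass `F(X)(A) - |A|/2^m` is
`∑ₓ X x · (1[F x ∈ A] - |A|/2^m)`, a weighted sum of independent centred Bernoulli variables, so
Hoeffding's inequality bounds the probability that it reaches `ε` by `exp(-2ε²/∑ₓ X x²)`, and the
collision probability `∑ₓ X x²` of a `k`-source is at most `2^{-k}`. The statistical distance is the
excess mass of the test `A = {v | F(X) v > 2^{-m}}`, so a union bound over all `2^{2^m}` tests
bounds the failure probability by `2^{2^m} e^{-2ε²2^k} ≤ e^{-ε²2^k}`, since `2^m ≤ ε²2^k`. -/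

open MeasureTheory ProbabilityTheory Real
open scoped NNReal

section RandomFunction

variable {Ω : Type*} [Fintype Ω] [MeasurableSpace Ω] [MeasurableSingletonClass Ω]

lemma measureReal_uniformOn_univ (s : Finset Ω) :
    (uniformOn (Set.univ : Set Ω)).real s = #s / Fintype.card Ω := by
  simp [measureReal_def, uniformOn_univ, ENNReal.toReal_div]

variable {α : Type*} [Fintype α]

lemma uniformOn_univ_pi :
    uniformOn (Set.univ : Set (α → Ω)) = Measure.pi fun _ : α ↦ uniformOn (Set.univ : Set Ω) := by
  simpa using uniformOn_pi (ι := α) (f := fun _ ↦ (Set.univ : Set Ω))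

variable [Nonempty Ω] [DecidableEq Ω]

lemma hasSubgaussianMGF_ite_mem_sub (T : Finset Ω) :
    HasSubgaussianMGF (fun b ↦ (if b ∈ T then 1 else 0) - (#T / Fintype.card Ω : ℝ)) (1 / 4)
      (uniformOn (Set.univ : Set Ω)) := by
  have h := hasSubgaussianMGF_of_mem_Icc (μ := uniformOn (Set.univ : Set Ω))
    (X := (T : Set Ω).indicator 1) (a := 0) (b := 1) (Measurable.of_discrete).aemeasurable
    (ae_of_all _ fun b ↦ ⟨Set.indicator_nonneg (fun _ _ ↦ zero_le_one) b,
      Set.indicator_le_self' (fun _ _ ↦ zero_le_one) b⟩)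
  rw [integral_indicator_one (Finset.measurableSet _), measureReal_uniformOn_univ] at h
  convert h using 2
  · simp [Set.indicator_apply]
  · ext; norm_num

theorem card_filter_le_sum_mul_ite_mem_sub_div_card_le [DecidableEq α] (c : α → ℝ)
    (T : Finset Ω) {ε : ℝ} (hε : 0 ≤ ε) :
    (#{F : α → Ω | ε ≤ ∑ x, c x * ((if F x ∈ T then 1 else 0) - #T / Fintype.card Ω)} : ℝ)
      / Fintype.card (α → Ω) ≤ exp (-2 * ε ^ 2 / ∑ x, c x ^ 2) := by
  have hindep := iIndepFun_pi (μ := fun _ : α ↦ uniformOn (Set.univ : Set Ω))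
    (X := fun x b ↦ c x * ((if b ∈ T then 1 else 0) - (#T / Fintype.card Ω : ℝ)))
    fun _ ↦ Measurable.of_discrete.aemeasurable
  have h := HasSubgaussianMGF.measure_sum_ge_le_of_iIndepFun hindep (s := Finset.univ)
    (fun x _ ↦ HasSubgaussianMGF.of_map (Y := fun F : α → Ω ↦ F x)
      (X := fun b : Ω ↦ c x * ((if b ∈ T then 1 else 0) - (#T / Fintype.card Ω : ℝ)))
      (measurable_pi_apply x).aemeasurable
      (by rw [(measurePreserving_eval _ x).map_eq]
          exact (hasSubgaussianMGF_ite_mem_sub T).const_mul (c x))) hε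
  rw [← uniformOn_univ_pi] at h
  rw [← measureReal_uniformOn_univ]
  convert h using 2
  · simp
  · -- `const_mul` writes the variance proxy with a raw subtype literal, which the `NNReal`
    -- coercion lemmas do not match, so the cast is unfolded by `show`.
    have hc (x : α) : ((⟨c x ^ 2, sq_nonneg _⟩ * (1 / 4) : ℝ≥0) : ℝ) = c x ^ 2 / 4 := by
      show c x ^ 2 * ((1 / 4 : ℝ≥0) : ℝ) = _; norm_num; ring
    rw [NNReal.coe_sum, Finset.sum_congr rfl fun x _ ↦ hc x, ← Finset.sum_div]
    ring

end RandomFunction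

section StatDist

variable {S : Type*} [Fintype S]

theorem statDist_eq_sum_filter_lt {p q : S → ℝ} (h : ∑ s, p s = ∑ s, q s) :
    statDist p q = ∑ s with q s < p s, (p s - q s) := by
  have hzero : ∑ s with q s < p s, (p s - q s) + ∑ s with ¬q s < p s, (p s - q s) = 0 := by
    rw [Finset.sum_filter_add_sum_filter_not, Finset.sum_sub_distrib, h, sub_self]
  have hpos : ∑ s with q s < p s, |p s - q s| = ∑ s with q s < p s, (p s - q s) :=
    Finset.sum_congr rfl fun s hs ↦ abs_of_pos (sub_pos.2 (Finset.mem_filter.1 hs).2)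
  have hneg : ∑ s with ¬q s < p s, |p s - q s| = -∑ s with ¬q s < p s, (p s - q s) := by
    rw [← Finset.sum_neg_distrib]
    exact Finset.sum_congr rfl fun s hs ↦
      abs_of_nonpos (sub_nonpos.2 (not_lt.1 (Finset.mem_filter.1 hs).2))
  rw [statDist, ← Finset.sum_filter_add_sum_filter_not _ (fun s ↦ q s < p s), hpos, hneg]
  linarith

end StatDist

section Push

variable {S T : Type*} [Fintype S] [DecidableEq T]

theorem sum_push_mem (f : S → T) (p : S → ℝ) (A : Finset T) :
    ∑ t ∈ A, push f p t = ∑ s, p s * (if f s ∈ A then 1 else 0) := by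
  simp only [push]
  rw [Finset.sum_comm]
  exact Finset.sum_congr rfl fun s _ ↦ by rw [Finset.sum_ite_eq, mul_boole]

theorem sum_push [Fintype T] (f : S → T) (p : S → ℝ) : ∑ t, push f p t = ∑ s, p s := by
  simp [sum_push_mem]

end Push

theorem card_BS (m : ℕ) : Fintype.card (BS m) = 2 ^ m := by
  simp

theorem sum_unif_mem (m : ℕ) (A : Finset (BS m)) : ∑ v ∈ A, unif m v = #A / 2 ^ m := by
  simp [unif, div_eq_mul_inv]

theorem sum_unif (m : ℕ) : ∑ v, unif m v = 1 := by
  rw [sum_unif_mem, Finset.card_univ, card_BS]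
  push_cast
  exact div_self (by positivity)

theorem sum_push_sub_unif {S : Type*} [Fintype S] {p : S → ℝ} (hp : ∑ s, p s = 1)
    {m : ℕ} (F : S → BS m) (A : Finset (BS m)) :
    ∑ v ∈ A, (push F p v - unif m v) = ∑ s, p s * ((if F s ∈ A then 1 else 0) - #A / 2 ^ m) := by
  simp only [Finset.sum_sub_distrib, sum_push_mem, sum_unif_mem, mul_sub, ← Finset.sum_mul, hp,
    one_mul]

theorem two_pow_mul_exp_neg_two_mul_le {N : ℕ} {V : ℝ} (h : (N : ℝ) ≤ V) :
    (2 : ℝ) ^ N * exp (-(2 * V)) ≤ exp (-V) := by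
  have h2N : (2 : ℝ) ^ N ≤ exp V :=
    calc (2 : ℝ) ^ N ≤ exp 1 ^ N := by gcongr; linarith [exp_one_gt_d9]
      _ = exp N := exp_one_pow N
      _ ≤ exp V := exp_le_exp.2 h
  calc (2 : ℝ) ^ N * exp (-(2 * V)) ≤ exp V * exp (-(2 * V)) := by gcongr
    _ = exp (-V) := by rw [← exp_add]; ring_nf

theorem two_pow_le_sq_mul_rpow {m : ℕ} {k ε : ℝ} (hε : 0 < ε)
    (hm : (m : ℝ) ≤ k - 2 * logb 2 (1 / ε)) : (2 : ℝ) ^ m ≤ ε ^ 2 * 2 ^ k :=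
  calc (2 : ℝ) ^ m = 2 ^ (m : ℝ) := (rpow_natCast 2 m).symm
    _ ≤ 2 ^ (k - 2 * logb 2 (1 / ε)) := rpow_le_rpow_of_exponent_le one_le_two hm
    _ = ε ^ 2 * 2 ^ k := by
      rw [rpow_sub two_pos, mul_comm 2, rpow_mul zero_le_two, rpow_two,
        rpow_logb two_pos (by norm_num) (by positivity)]
      field_simp

theorem sum_sq_pos_of_sum_ne_zero {ι : Type*} {s : Finset ι} {f : ι → ℝ}
    (h : ∑ i ∈ s, f i ≠ 0) : 0 < ∑ i ∈ s, f i ^ 2 := by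
  obtain ⟨i, hi, hfi⟩ := Finset.exists_ne_zero_of_sum_ne_zero h
  exact Finset.sum_pos' (fun i _ ↦ sq_nonneg (f i)) ⟨i, hi, by positivity⟩

theorem sum_sq_le_mul_sum {ι : Type*} (s : Finset ι) {f : ι → ℝ} {B : ℝ}
    (h0 : ∀ i, 0 ≤ f i) (hB : ∀ i, f i ≤ B) : ∑ i ∈ s, f i ^ 2 ≤ B * ∑ i ∈ s, f i := by
  rw [Finset.mul_sum]
  exact Finset.sum_le_sum fun i _ ↦ by rw [sq]; exact mul_le_mul_of_nonneg_right (hB i) (h0 i)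

theorem one_sub_le_card_filter_div_card {α : Type*} [Fintype α] [Nonempty α] (P : α → Prop)
    [DecidablePred P] {δ : ℝ} (h : (#{x | ¬P x} : ℝ) / Fintype.card α ≤ δ) :
    1 - δ ≤ (#{x | P x} : ℝ) / Fintype.card α := by
  have hsplit : (#{x | P x} : ℝ) + #{x | ¬P x} = Fintype.card α := by
    exact_mod_cast Finset.card_filter_add_card_filter_not (s := Finset.univ) P
  have hN : (0 : ℝ) < Fintype.card α := by exact_mod_cast Fintype.card_pos
  rw [div_le_iff₀ hN] at h
  rw [le_div_iff₀ hN]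
  linarith

theorem card_lt_statDist_push_unif_div_le {S : Type*} [Fintype S] [DecidableEq S] {p : S → ℝ}
    (hp : ∑ s, p s = 1) (m : ℕ) {ε : ℝ} (hε : 0 ≤ ε) :
    (#{F : S → BS m | ε < statDist (push F p) (unif m)} : ℝ) / Fintype.card (S → BS m) ≤
      2 ^ 2 ^ m * exp (-2 * ε ^ 2 / ∑ s, p s ^ 2) := by
  set dev : Finset (BS m) → (S → BS m) → ℝ :=
    fun A F ↦ ∑ s, p s * ((if F s ∈ A then 1 else 0) - #A / Fintype.card (BS m))
  have hsub : ({F | ε < statDist (push F p) (unif m)} : Finset (S → BS m)) ⊆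
      Finset.univ.biUnion fun A ↦ {F | ε ≤ dev A F} := by
    intro F hF
    have hsum : ∑ v, push F p v = ∑ v, unif m v := by rw [sum_push, hp, sum_unif]
    rw [Finset.mem_filter, statDist_eq_sum_filter_lt hsum, sum_push_sub_unif hp] at hF
    refine Finset.mem_biUnion.2 ⟨Finset.univ.filter fun v ↦ unif m v < push F p v,
      Finset.mem_univ _, Finset.mem_filter.2 ⟨Finset.mem_univ _, ?_⟩⟩
    simp only [dev, card_BS, Nat.cast_pow, Nat.cast_ofNat]
    exact hF.2.le
  have hcard : (#{F | ε < statDist (push F p) (unif m)} : ℝ) ≤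
      ∑ A : Finset (BS m), (#{F | ε ≤ dev A F} : ℝ) := by
    exact_mod_cast (Finset.card_le_card hsub).trans Finset.card_biUnion_le
  calc (#{F | ε < statDist (push F p) (unif m)} : ℝ) / Fintype.card (S → BS m)
      ≤ ∑ A : Finset (BS m), (#{F | ε ≤ dev A F} : ℝ) / Fintype.card (S → BS m) := by
        rw [← Finset.sum_div]; gcongr
    _ ≤ ∑ _A : Finset (BS m), exp (-2 * ε ^ 2 / ∑ s, p s ^ 2) :=
        Finset.sum_le_sum fun A _ ↦ card_filter_le_sum_mul_ite_mem_sub_div_card_le p A hε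
    _ = 2 ^ 2 ^ m * exp (-2 * ε ^ 2 / ∑ s, p s ^ 2) := by
        simp [Fintype.card_finset]

/-- A uniformly random function `F : {0,1}^n → {0,1}^m` with `m ≤ k - 2·log₂(1/ε)`
extracts from a fixed `(n,k)`-source `X` with error `ε`, with probability at least
`1 - 2·e^{-ε²·2^k}` over the choice of `F`. -/
theorem random_function_extracts
    (n m : ℕ) (k ε : ℝ) (X : BS n → ℝ)
    (hX : IsDist X) (hsrc : ∀ x, X x ≤ (2:ℝ) ^ (-k)) (hε : 0 < ε)
    (hm : (m:ℝ) ≤ k - 2 * Real.logb 2 (1 / ε)) :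
    1 - 2 * Real.exp (-(ε ^ 2 * (2:ℝ) ^ k)) ≤
      ((Finset.univ.filter (fun F : BS n → BS m =>
          statDist (push F X) (unif m) ≤ ε)).card : ℝ) /
        ((Finset.univ : Finset (BS n → BS m)).card : ℝ) := by
  have hsq_pos : 0 < ∑ x, X x ^ 2 := sum_sq_pos_of_sum_ne_zero (hX.2.trans_ne one_ne_zero)
  have hsq : ∑ x, X x ^ 2 ≤ 2 ^ (-k) := by
    simpa [hX.2] using sum_sq_le_mul_sum Finset.univ hX.1 hsrc
  have hexp : -2 * ε ^ 2 / ∑ x, X x ^ 2 ≤ -(2 * (ε ^ 2 * 2 ^ k)) :=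
    calc -2 * ε ^ 2 / ∑ x, X x ^ 2 = -(2 * ε ^ 2 / ∑ x, X x ^ 2) := by ring
      _ ≤ -(2 * ε ^ 2 / 2 ^ (-k)) :=
        neg_le_neg (div_le_div_of_nonneg_left (by positivity) hsq_pos hsq)
      _ = -(2 * (ε ^ 2 * 2 ^ k)) := by rw [rpow_neg zero_le_two, div_inv_eq_mul]; ring
  have hV : ((2 ^ m : ℕ) : ℝ) ≤ ε ^ 2 * 2 ^ k := by exact_mod_cast two_pow_le_sq_mul_rpow hε hm
  rw [Finset.card_univ]
  refine one_sub_le_card_filter_div_card _ ?_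
  simp only [not_le]
  calc (#{F | ε < statDist (push F X) (unif m)} : ℝ) / Fintype.card (BS n → BS m)
      ≤ 2 ^ 2 ^ m * exp (-2 * ε ^ 2 / ∑ x, X x ^ 2) :=
        card_lt_statDist_push_unif_div_le hX.2 m hε.le
    _ ≤ 2 ^ 2 ^ m * exp (-(2 * (ε ^ 2 * 2 ^ k))) := by gcongr
    _ ≤ exp (-(ε ^ 2 * 2 ^ k)) := two_pow_mul_exp_neg_two_mul_le hV
    _ ≤ 2 * exp (-(ε ^ 2 * 2 ^ k)) := by linarith [exp_pos (-(ε ^ 2 * 2 ^ k))]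
end

section
/- Suppose that every (t,n,ε)-secret sharing scheme for b-bit messages using d bits of randomness requires a (δ,m)-extractable class of randomness sources (i.e., for every such scheme (Sh, Rec, 𝒴), the class 𝒴 is (δ,m)-extractable), and suppose there exists a (t,n,t',n')-distribution design. Then every (t',n',ε)-secret sharing scheme for b-bit messages using d bits of randomness also requires a (δ,m)-extractable class of randomness sources. -/
open Finset
open scoped Classical

/-- A class `𝒴` of randomness sources over `{0,1}^d` is `(δ, m)`-extractable if some
deterministic function `ext` maps every source in `𝒴` to within statistical distance `δ`
of uniform on `{0,1}^m`. -/
def Extractable (d m : ℕ) (𝒴 : Set (BS d → ℝ)) (δ : ℝ) : Prop :=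
  ∃ ext : BS d → BS m, ∀ Y ∈ 𝒴, statDist (push ext Y) (unif m) ≤ δ

/-- `(Sh, Rec, 𝒴)` is a `(t, n, ε)`-secret sharing scheme for `b`-bit messages using
`d` bits of randomness, with shares in `{0,1}^ℓ`.  The restriction of the shares to a
subset `T ⊆ [n]` is modelled by masking the shares outside `T` with `none`. -/
def IsSS (t n b d ℓ : ℕ) (Sh : BS b → BS d → Fin n → BS ℓ)
    (Rec : (Fin n → Option (BS ℓ)) → BS b) (𝒴 : Set (BS d → ℝ)) (ε : ℝ) : Prop :=
  (∀ Y ∈ 𝒴, IsDist Y) ∧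
  -- correctness on authorized sets
  (∀ Y ∈ 𝒴, ∀ T : Finset (Fin n), t ≤ T.card →
    ∀ x : BS b, ∀ y : BS d, 0 < Y y →
      Rec (fun i => if i ∈ T then some (Sh x y i) else none) = x) ∧
  -- secrecy on unauthorized sets
  (∀ Y ∈ 𝒴, ∀ T : Finset (Fin n), T.card < t → ∀ x x' : BS b,
    statDist (push (fun y => (fun i => if i ∈ T then some (Sh x y i) else none)) Y)
             (push (fun y => (fun i => if i ∈ T then some (Sh x' y i) else none)) Y) ≤ ε)

/-- `D₁, …, Dₙ ⊆ [n']` is a `(t, n, t', n')`-distribution design if for every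
`T ⊆ [n]`, the union `∪_{i ∈ T} D_i` has size at least `t'` iff `|T| ≥ t`. -/
def IsDistDesign (t n t' n' : ℕ) (D : Fin n → Finset (Fin n')) : Prop :=
  ∀ T : Finset (Fin n), t' ≤ (T.biUnion D).card ↔ t ≤ T.card

lemma push_push {S T U : Type*} [Fintype S] [Fintype T] [DecidableEq T] [DecidableEq U]
    (g : S → T) (f : T → U) (p : S → ℝ) : push f (push g p) = push (f ∘ g) p := by
  funext u
  unfold push
  have h1 : ∀ t : T, (if f t = u then ∑ s, (if g s = t then p s else 0) else 0)
      = ∑ s, if g s = t then (if f t = u then p s else 0) else 0 := by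
    intro t; split_ifs with h <;> simp [h]
  rw [Finset.sum_congr rfl fun t _ => h1 t, Finset.sum_comm]
  refine Finset.sum_congr rfl fun s _ => ?_
  simp [Finset.sum_ite_eq']

lemma statDist_push_le {S T : Type*} [Fintype S] [Fintype T] [DecidableEq T]
    (f : S → T) (p q : S → ℝ) : statDist (push f p) (push f q) ≤ statDist p q := by
  unfold statDist push
  gcongr ?_ / 2
  calc ∑ t, |(∑ s, if f s = t then p s else 0) - ∑ s, if f s = t then q s else 0|
      = ∑ t, |∑ s, ((if f s = t then p s else 0) - (if f s = t then q s else 0))| := by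
        simp [Finset.sum_sub_distrib]
    _ ≤ ∑ t, ∑ s, |(if f s = t then p s else 0) - (if f s = t then q s else 0)| :=
        Finset.sum_le_sum fun t _ => Finset.abs_sum_le_sum_abs _ _
    _ = ∑ t, ∑ s, (if f s = t then |p s - q s| else 0) := by
        refine Finset.sum_congr rfl fun t _ => Finset.sum_congr rfl fun s _ => ?_
        split_ifs <;> simp
    _ = ∑ s, ∑ t, (if f s = t then |p s - q s| else 0) := Finset.sum_comm
    _ = ∑ s, |p s - q s| := by
        refine Finset.sum_congr rfl fun s _ => ?_
        simp [Finset.sum_ite_eq']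

def joinIdx {n' ℓ' : ℕ} (j : Fin n') (r : Fin ℓ') : Fin (n' * ℓ') :=
  ⟨j.1 * ℓ' + r.1, by
    calc j.1 * ℓ' + r.1 < j.1 * ℓ' + ℓ' := by omega
      _ = (j.1 + 1) * ℓ' := by ring
      _ ≤ n' * ℓ' := Nat.mul_le_mul_right _ j.isLt⟩

def splitIdx {n' ℓ' : ℕ} (k : Fin (n' * ℓ')) : Fin n' × Fin ℓ' :=
  have h0 : 0 < ℓ' := by
    rcases Nat.eq_zero_or_pos ℓ' with h | h
    · exact absurd k.isLt (by simp [h])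
    · exact h
  ⟨⟨k.1 / ℓ', (Nat.div_lt_iff_lt_mul h0).mpr k.isLt⟩, ⟨k.1 % ℓ', Nat.mod_lt _ h0⟩⟩

lemma splitIdx_joinIdx {n' ℓ' : ℕ} (j : Fin n') (r : Fin ℓ') :
    splitIdx (joinIdx j r) = (j, r) := by
  unfold splitIdx joinIdx
  have h0 : 0 < ℓ' := lt_of_le_of_lt (Nat.zero_le _) r.isLt
  ext
  · simp only
    rw [Nat.add_comm, Nat.add_mul_div_right _ _ h0, Nat.div_eq_of_lt r.isLt, Nat.zero_add]
  · simp only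
    rw [Nat.add_comm, Nat.add_mul_mod_self_right, Nat.mod_eq_of_lt r.isLt]

/-- If every `(t,n,ε)`-secret sharing scheme for `b`-bit messages using `d` bits of
randomness requires a `(δ,m)`-extractable class of sources, and a
`(t,n,t',n')`-distribution design exists, then every `(t',n',ε)`-secret sharing scheme
for `b`-bit messages using `d` bits of randomness also requires a `(δ,m)`-extractable
class of sources. -/
theorem randomless_reduction_via_distribution_design
    (t n t' n' b d m : ℕ) (ε δ : ℝ)
    (hreq : ∀ (ℓ : ℕ) (Sh : BS b → BS d → Fin n → BS ℓ)
      (Rec : (Fin n → Option (BS ℓ)) → BS b) (𝒴 : Set (BS d → ℝ)),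
      IsSS t n b d ℓ Sh Rec 𝒴 ε → Extractable d m 𝒴 δ)
    (hdd : ∃ D : Fin n → Finset (Fin n'), IsDistDesign t n t' n' D) :
    ∀ (ℓ' : ℕ) (Sh' : BS b → BS d → Fin n' → BS ℓ')
      (Rec' : (Fin n' → Option (BS ℓ')) → BS b) (𝒴' : Set (BS d → ℝ)),
      IsSS t' n' b d ℓ' Sh' Rec' 𝒴' ε → Extractable d m 𝒴' δ := by
  intro ℓ' Sh' Rec' 𝒴' hSS'
  obtain ⟨D, hD⟩ := hdd
  obtain ⟨hDist, hCor, hSec⟩ := hSS'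
  -- the combined scheme
  set Sh : BS b → BS d → Fin n → BS (n' * ℓ') := fun x y i k =>
    if (splitIdx k).1 ∈ D i then Sh' x y (splitIdx k).1 (splitIdx k).2 else false with hSh
  set Rec : (Fin n → Option (BS (n' * ℓ'))) → BS b := fun f =>
    Rec' (fun j =>
      if h : ∃ i : Fin n, j ∈ D i ∧ (f i).isSome then
        some (fun r => ((f h.choose).getD (fun _ => false)) (joinIdx j r))
      else none) with hRec
  refine hreq (n' * ℓ') Sh Rec 𝒴' ⟨hDist, ?_, ?_⟩
  · -- correctness
    intro Y hY T hT x y hy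
    have key : (fun j =>
        if h : ∃ i : Fin n, j ∈ D i ∧
            ((if i ∈ T then some (Sh x y i) else none) : Option (BS (n' * ℓ'))).isSome then
          some (fun r => (((if h.choose ∈ T then some (Sh x y h.choose) else none) :
              Option (BS (n' * ℓ'))).getD (fun _ => false)) (joinIdx j r))
        else none)
        = (fun j => if j ∈ T.biUnion D then some (Sh' x y j) else none) := by
      funext j
      by_cases hj : j ∈ T.biUnion D
      · obtain ⟨i, hiT, hiD⟩ := Finset.mem_biUnion.mp hj
        have hex : ∃ i : Fin n, j ∈ D i ∧
            ((if i ∈ T then some (Sh x y i) else none) : Option (BS (n' * ℓ'))).isSome :=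
          ⟨i, hiD, by simp [hiT]⟩
        rw [dif_pos hex]
        obtain ⟨hjD, hsome⟩ := hex.choose_spec
        have hcT : hex.choose ∈ T := by
          by_contra hc
          rw [if_neg hc] at hsome
          exact absurd hsome (by simp)
        simp only [if_pos hj, if_pos hcT, Option.getD_some]
        congr 1
        funext r
        simp only [hSh, splitIdx_joinIdx]
        rw [if_pos hjD]
      · rw [dif_neg, if_neg hj]
        rintro ⟨i, hiD, hsome⟩
        have hiT : i ∈ T := by
          by_contra hc
          rw [if_neg hc] at hsome
          exact absurd hsome (by simp)
        exact hj (Finset.mem_biUnion.mpr ⟨i, hiT, hiD⟩)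
    simp only [hRec]
    rw [key]
    exact hCor Y hY (T.biUnion D) ((hD T).mpr hT) x y hy
  · -- secrecy
    intro Y hY T hT x x'
    set U := T.biUnion D with hU
    have hUcard : U.card < t' := by
      by_contra hc
      exact absurd ((hD T).mp (le_of_not_gt hc)) (not_le_of_gt hT)
    set F : (Fin n' → Option (BS ℓ')) → (Fin n → Option (BS (n' * ℓ'))) := fun g i =>
      if i ∈ T then
        some (fun k =>
          if (splitIdx k).1 ∈ D i then
            ((g (splitIdx k).1).getD (fun _ => false)) (splitIdx k).2
          else false)
      else none with hF
    have hcomp : ∀ x₀ : BS b,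
        (fun y => (fun i => if i ∈ T then some (Sh x₀ y i) else none))
          = F ∘ (fun y => (fun j => if j ∈ U then some (Sh' x₀ y j) else none)) := by
      intro x₀
      funext y
      funext i
      by_cases hiT : i ∈ T
      · simp only [Function.comp, hF, if_pos hiT]
        congr 1
        funext k
        by_cases hk : (splitIdx k).1 ∈ D i
        · have hkU : (splitIdx k).1 ∈ U := Finset.mem_biUnion.mpr ⟨i, hiT, hk⟩
          simp [hSh, hk, hkU]
        · simp [hSh, hk]
      · simp [Function.comp, hF, hiT]
    rw [hcomp x, hcomp x', ← push_push, ← push_push]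
    exact le_trans (statDist_push_le F _ _) (hSec Y hY U hUcard x x')
end
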